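/- Let m be a basic probability assignment on a finite set Θ of cardinality n with k_Bel < 1. Then the intersection probability is the convex combination, with coefficient β[Bel], of the barycentres of the lower and upper simplices: for every y ∈ Θ, p[Bel](y) = β[Bel]·( (1/n)·∑_{x∈Θ} t^{n−1}_x(y) ) + (1 − β[Bel])·( (1/n)·∑_{x∈Θ} t¹_x(y) ). -/

import Mathlib

/-! The barycentre of either simplex at `y` is the common coordinate (`Pl(y)` resp. `m(y)`) shifted
by `(1 - k)/n`. In the `β`-combination the shifts add up to `(1 - k_Bel - β (k_Pl - k_Bel))/n`,
which vanishes because `k_Pl = ∑_B |B| m(B) ≥ 1 > k_Bel` makes the denominator of `β` nonzero. -/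

open Finset

/-- A basic probability assignment on a finite set `Θ`. -/
def IsBPA {Θ : Type*} [Fintype Θ] (m : Finset Θ → ℝ) : Prop :=
  m ∅ = 0 ∧ (∀ A, 0 ≤ m A) ∧ (∑ A : Finset Θ, m A) = 1

/-- Belief function `Bel(A) = ∑_{B ⊆ A} m(B)`. -/
noncomputable def Bel {Θ : Type*} [Fintype Θ] [DecidableEq Θ] (m : Finset Θ → ℝ)
    (A : Finset Θ) : ℝ :=
  ∑ B ∈ A.powerset, m B

/-- Plausibility function `Pl(A) = ∑_{B ∩ A ≠ ∅} m(B)`. -/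
noncomputable def Pl {Θ : Type*} [Fintype Θ] [DecidableEq Θ] (m : Finset Θ → ℝ)
    (A : Finset Θ) : ℝ :=
  ∑ B ∈ Finset.univ.filter (fun B => B ∩ A ≠ ∅), m B

/-- Total mass of singletons `k_Bel`. -/
noncomputable def kBel {Θ : Type*} [Fintype Θ] (m : Finset Θ → ℝ) : ℝ :=
  ∑ x : Θ, m {x}

/-- Total plausibility of singletons `k_Pl`. -/
noncomputable def kPl {Θ : Type*} [Fintype Θ] [DecidableEq Θ] (m : Finset Θ → ℝ) : ℝ :=
  ∑ x : Θ, Pl m {x}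

/-- `β[Bel] = (1 - k_Bel)/(k_Pl - k_Bel)`. -/
noncomputable def betaBel {Θ : Type*} [Fintype Θ] [DecidableEq Θ] (m : Finset Θ → ℝ) : ℝ :=
  (1 - kBel m) / (kPl m - kBel m)

/-- The intersection probability `p[Bel](x) = m(x) + β[Bel]⬝(Pl(x) - m(x))`. -/
noncomputable def pInt {Θ : Type*} [Fintype Θ] [DecidableEq Θ] (m : Finset Θ → ℝ)
    (x : Θ) : ℝ :=
  m {x} + betaBel m * (Pl m {x} - m {x})

/-- Vertex `t¹_x` of the lower simplex. -/
noncomputable def lowerVertex {Θ : Type*} [Fintype Θ] [DecidableEq Θ]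
    (m : Finset Θ → ℝ) (x : Θ) : Θ → ℝ :=
  fun y => if y = x then m {y} + 1 - kBel m else m {y}

/-- Vertex `t^{n-1}_x` of the upper simplex. -/
noncomputable def upperVertex {Θ : Type*} [Fintype Θ] [DecidableEq Θ]
    (m : Finset Θ → ℝ) (x : Θ) : Θ → ℝ :=
  fun y => if y = x then Pl m {y} + 1 - kPl m else Pl m {y}

lemma card_inv_mul_sum_ite_eq {ι : Type*} [Fintype ι] [DecidableEq ι] (y : ι) (a b : ℝ) :
    1 / (Fintype.card ι : ℝ) * ∑ x : ι, (if y = x then b else a) =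
      a + (b - a) / Fintype.card ι := by
  have : Nonempty ι := ⟨y⟩
  have hcard : (Fintype.card ι : ℝ) ≠ 0 := Nat.cast_ne_zero.mpr Fintype.card_ne_zero
  have hsplit : ∀ x, (if y = x then b else a) = a + if y = x then b - a else 0 := by
    intro x
    split_ifs <;> ring
  simp only [hsplit, sum_add_distrib, sum_const, card_univ, nsmul_eq_mul, sum_ite_eq,
    mem_univ, if_true]
  field_simp

section BPA

variable {Θ : Type*} [Fintype Θ] [DecidableEq Θ] {m : Finset Θ → ℝ}

lemma Pl_singleton (m : Finset Θ → ℝ) (x : Θ) :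
    Pl m {x} = ∑ B : Finset Θ, if x ∈ B then m B else 0 := by
  rw [Pl, sum_filter]
  refine sum_congr rfl fun B _ => if_congr ?_ rfl rfl
  rw [← nonempty_iff_ne_empty, ← not_disjoint_iff_nonempty_inter, disjoint_singleton_right, not_not]

lemma kPl_eq_sum_card_mul (m : Finset Θ → ℝ) : kPl m = ∑ B : Finset Θ, (B.card : ℝ) * m B := by
  simp only [kPl, Pl_singleton]
  rw [sum_comm]
  refine sum_congr rfl fun B _ => ?_
  rw [sum_ite_mem, univ_inter, sum_const, nsmul_eq_mul]

lemma one_le_kPl (hm : IsBPA m) : 1 ≤ kPl m := by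
  obtain ⟨hempty, hnonneg, hsum⟩ := hm
  rw [kPl_eq_sum_card_mul, ← hsum]
  refine sum_le_sum fun B _ => ?_
  rcases B.eq_empty_or_nonempty with rfl | hB
  · simp [hempty]
  · exact le_mul_of_one_le_left (hnonneg B) (by exact_mod_cast hB.card_pos)

lemma betaBel_mul_sub (hm : IsBPA m) (h1 : kBel m < 1) :
    betaBel m * (kPl m - kBel m) = 1 - kBel m :=
  div_mul_cancel₀ _ (by linarith [one_le_kPl hm])

lemma barycentre_upperVertex (y : Θ) :
    1 / (Fintype.card Θ : ℝ) * ∑ x : Θ, upperVertex m x y =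
      Pl m {y} + (1 - kPl m) / Fintype.card Θ :=
  (card_inv_mul_sum_ite_eq y _ _).trans (by ring)

lemma barycentre_lowerVertex (y : Θ) :
    1 / (Fintype.card Θ : ℝ) * ∑ x : Θ, lowerVertex m x y =
      m {y} + (1 - kBel m) / Fintype.card Θ :=
  (card_inv_mul_sum_ite_eq y _ _).trans (by ring)

end BPA

theorem pInt_convex_combination_of_barycentres_general
    {Θ : Type*} [Fintype Θ] [DecidableEq Θ]
    (m : Finset Θ → ℝ) (hm : IsBPA m) (h1 : kBel m < 1) :
    ∀ y : Θ,
      pInt m y =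
        betaBel m * ((1 / (Fintype.card Θ : ℝ)) * ∑ x : Θ, upperVertex m x y) +
          (1 - betaBel m) * ((1 / (Fintype.card Θ : ℝ)) * ∑ x : Θ, lowerVertex m x y) := by
  intro y
  rw [barycentre_upperVertex, barycentre_lowerVertex, pInt]
  have hβ := betaBel_mul_sub hm h1
  have : Nonempty Θ := ⟨y⟩
  have hcard : (Fintype.card Θ : ℝ) ≠ 0 := Nat.cast_ne_zero.mpr Fintype.card_ne_zero
  field_simp
  linear_combination hβ

/-- Proposition 3: the intersection probability is the convex combination,
with coefficient `β[Bel]`, of the barycentres of the lower and upper simplices. -/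
theorem pInt_convex_combination_of_barycentres
    {Θ : Type*} [Fintype Θ] [DecidableEq Θ] [Nonempty Θ]
    (m : Finset Θ → ℝ) (hm : IsBPA m) (h1 : kBel m < 1) :
    ∀ y : Θ,
      pInt m y =
        betaBel m * ((1 / (Fintype.card Θ : ℝ)) * ∑ x : Θ, upperVertex m x y) +
          (1 - betaBel m) * ((1 / (Fintype.card Θ : ℝ)) * ∑ x : Θ, lowerVertex m x y) :=
  pInt_convex_combination_of_barycentres_general m hm h1
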